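/- arXiv:1003.0500 — 2 statements merged into one kernel-verified Lean document; each statement's English description precedes it below -/
import Mathlib

section
/- If A ∈ sp(4,ℂ) satisfies A² = 0 and the kernel of A has dimension 2 (equivalently A has rank 2), then there exists B ∈ Sp(4,ℂ) such that B⁻¹AB = E₁₃ + E₂₄, where Eᵢⱼ is the 4×4 matrix whose (i,j) entry is 1 and all other entries are 0. -/
/-!
The form `β(x, y) = ω(Ax, y)`, with `ω(x, y) = xᵀ J y`, is symmetric because `A ∈ sp(4, ℂ)`,
and its radical is `ker A` because `ω` is nondegenerate. As `ker A` has dimension `2`, the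
symmetric form `β` has rank `2`, so over `ℂ` it admits an orthonormal pair `v, w`: after
normalising an anisotropic `v`, `β` cannot vanish on the hyperplane `β(v, ·) = 0`, since that
hyperplane would then lie in the radical. Then `Av, Aw, v, w + ω(v, w) Av` is a symplectic
basis, and `A` maps it to `0, 0, Av, Aw` because `A² = 0`.
-/

open Matrix

/-- The 4×4 standard symplectic matrix `J = [[0, I], [-I, 0]]`. -/
noncomputable def J4 : Matrix (Fin 4) (Fin 4) ℂ :=
  !![0, 0, 1, 0;
     0, 0, 0, 1;
     -1, 0, 0, 0;
     0, -1, 0, 0]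

open Module LinearMap

namespace LinearMap.BilinForm

variable {K V : Type*} [Field K] [AddCommGroup V] [Module K V] {β : LinearMap.BilinForm K V}

theorem exists_smul_self_eq_one [IsAlgClosed K] {z : V} (hz : β z z ≠ 0) :
    ∃ t : K, β (t • z) (t • z) = 1 := by
  obtain ⟨s, hs⟩ := IsAlgClosed.exists_pow_nat_eq (β z z) two_pos
  have hs0 : s ≠ 0 := by rintro rfl; simp_all
  refine ⟨s⁻¹, ?_⟩
  simp only [map_smul, smul_apply, smul_eq_mul, ← hs]
  field_simp

theorem ker_apply_le_ker_of_restrict_eq_zero (hβ : β.IsSymm) {v : V} (hv : β v v = 1)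
    (h : β.restrict (ker (β v)) = 0) : ker (β v) ≤ ker β := by
  intro x hx
  rw [mem_ker] at hx ⊢
  ext y
  -- `x` is `β`-orthogonal to both `y - β(v, y) v` and `v`.
  have hy : y - β v y • v ∈ ker (β v) := by simp [hv]
  have h0 := congr_fun₂ h ⟨x, hx⟩ ⟨_, hy⟩
  rwa [restrict_apply, domRestrict_apply, map_sub, map_smul, ← hβ.eq v x, hx, smul_zero,
    sub_zero] at h0

theorem exists_orthonormal_pair [IsAlgClosed K] [Invertible (2 : K)] [FiniteDimensional K V]
    (hβ : β.IsSymm) (hker : finrank K (ker β) + 1 < finrank K V) :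
    ∃ v w, β v v = 1 ∧ β w w = 1 ∧ β v w = 0 := by
  have hβ0 : β ≠ 0 := by
    rintro rfl
    rw [ker_zero, finrank_top] at hker
    omega
  obtain ⟨v₀, hv₀⟩ := exists_bilinForm_self_ne_zero hβ0 (isSymm_iff.mp hβ)
  obtain ⟨s, hv⟩ := exists_smul_self_eq_one hv₀
  generalize s • v₀ = v at hv
  have hcodim := Module.Dual.finrank_ker_add_one_of_ne_zero (f := β v) fun h0 => by
    simp [h0] at hv
  have hβW : β.restrict (ker (β v)) ≠ 0 := fun h0 =>
    absurd (Submodule.finrank_mono (ker_apply_le_ker_of_restrict_eq_zero hβ hv h0)) (by omega)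
  obtain ⟨w₀, hw₀⟩ := exists_bilinForm_self_ne_zero hβW (isSymm_iff.mp (hβ.restrict _))
  obtain ⟨t, hw⟩ := exists_smul_self_eq_one (β := β) hw₀
  exact ⟨v, t • w₀, hv, hw, Submodule.smul_mem _ t w₀.2⟩

end LinearMap.BilinForm

namespace Matrix

variable {n R : Type*} [Fintype n] [CommRing R]

theorem mul_transpose_of (A : Matrix n n R) {m : Type*} (b : m → n → R) :
    A * (of b)ᵀ = (of fun j => A *ᵥ b j)ᵀ := by
  ext i j
  simp [mul_apply, mulVec, dotProduct]

variable [DecidableEq n]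

theorem of_mul_mul_transpose_of_apply (M : Matrix n n R) {m : Type*} (b : m → n → R) (i j : m) :
    (of b * M * (of b)ᵀ) i j = toLinearMap₂' R M (b i) (b j) := by
  rw [mul_apply', toLinearMap₂'_apply', dotProduct_mulVec]
  rfl

theorem toLinearMap₂'_swap {J : Matrix n n R} (hJ : Jᵀ = -J) (x y : n → R) :
    toLinearMap₂' R J x y = -toLinearMap₂' R J y x := by
  rw [toLinearMap₂'_apply', toLinearMap₂'_apply', dotProduct_mulVec, ← mulVec_transpose, hJ,
    neg_mulVec, neg_dotProduct, dotProduct_comm]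

theorem toLinearMap₂'_mulVec_comm {J A : Matrix n n R} (hJ : Jᵀ = -J) (hA : Aᵀ * J + J * A = 0)
    (x y : n → R) : toLinearMap₂' R J (A *ᵥ x) y = toLinearMap₂' R J (A *ᵥ y) x := by
  rw [toLinearMap₂'_apply', ← vecMul_transpose, ← dotProduct_mulVec, mulVec_mulVec,
    eq_neg_of_add_eq_zero_left hA, neg_mulVec, dotProduct_neg, ← mulVec_mulVec,
    ← toLinearMap₂'_apply', ← toLinearMap₂'_swap hJ]

end Matrix

theorem det_J4 : J4.det = 1 := by
  simp [J4, det_succ_row_zero, Fin.sum_univ_succ, Fin.succAbove]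

theorem J4_transpose : J4ᵀ = -J4 := by
  ext i j
  fin_cases i <;> fin_cases j <;> simp [J4]

local notation "ω" => toLinearMap₂' ℂ J4

theorem J4_form_self (x : Fin 4 → ℂ) : ω x x = 0 := by
  have h := toLinearMap₂'_swap J4_transpose x x
  linear_combination h / 2

theorem transpose_mul_J4_mul_eq_J4_of_symplecticBasis {e₁ e₂ f₁ f₂ : Fin 4 → ℂ}
    (he : ω e₁ e₂ = 0) (hf : ω f₁ f₂ = 0) (h₁₁ : ω e₁ f₁ = 1) (h₂₂ : ω e₂ f₂ = 1)
    (h₁₂ : ω e₁ f₂ = 0) (h₂₁ : ω e₂ f₁ = 0) :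
    ((of ![e₁, e₂, f₁, f₂])ᵀ)ᵀ * J4 * (of ![e₁, e₂, f₁, f₂])ᵀ = J4 := by
  have swap := toLinearMap₂'_swap J4_transpose
  conv_rhs => rw [J4]
  ext i j
  rw [transpose_transpose, of_mul_mul_transpose_of_apply]
  fin_cases i <;> fin_cases j <;>
    simp [J4_form_self, swap e₂ e₁, swap f₂ f₁, swap f₁ e₁, swap f₁ e₂, swap f₂ e₁, swap f₂ e₂,
      he, hf, h₁₁, h₂₂, h₁₂, h₂₁]

theorem mul_transpose_of_eq_transpose_of_mul_E13_add_E24 {A : Matrix (Fin 4) (Fin 4) ℂ}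
    {e₁ e₂ f₁ f₂ : Fin 4 → ℂ}
    (he₁ : A *ᵥ e₁ = 0) (he₂ : A *ᵥ e₂ = 0) (hf₁ : A *ᵥ f₁ = e₁) (hf₂ : A *ᵥ f₂ = e₂) :
    A * (of ![e₁, e₂, f₁, f₂])ᵀ = (of ![e₁, e₂, f₁, f₂])ᵀ * !![0, 0, 1, 0;
                                                              0, 0, 0, 1;
                                                              0, 0, 0, 0;
                                                              0, 0, 0, 0] := by
  rw [mul_transpose_of]
  ext i j
  fin_cases j <;> simp [mul_apply, Fin.sum_univ_four, he₁, he₂, hf₁, hf₂]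

theorem isUnit_det_of_transpose_mul_J4_mul_eq_J4 {B : Matrix (Fin 4) (Fin 4) ℂ}
    (hB : Bᵀ * J4 * B = J4) : IsUnit B.det := by
  have h := congrArg det hB
  rw [det_mul, det_mul, det_transpose, det_J4, mul_one] at h
  exact IsUnit.of_mul_eq_one _ h

theorem exists_symplectic_conj_E13_add_E24 {A : Matrix (Fin 4) (Fin 4) ℂ}
    (hsp : Aᵀ * J4 + J4 * A = 0) (hA2 : A ^ 2 = 0) {v w : Fin 4 → ℂ}
    (hv : ω (A *ᵥ v) v = 1) (hw : ω (A *ᵥ w) w = 1) (hvw : ω (A *ᵥ v) w = 0) :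
    ∃ B : Matrix (Fin 4) (Fin 4) ℂ,
      Bᵀ * J4 * B = J4 ∧
      B⁻¹ * A * B = !![0, 0, 1, 0;
                       0, 0, 0, 1;
                       0, 0, 0, 0;
                       0, 0, 0, 0] := by
  have hAA (x : Fin 4 → ℂ) : A *ᵥ (A *ᵥ x) = 0 := by rw [mulVec_mulVec, ← sq, hA2, zero_mulVec]
  have hcomm := toLinearMap₂'_mulVec_comm J4_transpose hsp
  have himage (x y : Fin 4 → ℂ) : ω (A *ᵥ x) (A *ᵥ y) = 0 := by
    rw [hcomm, hAA, map_zero, LinearMap.zero_apply]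
  have hvAv : ω v (A *ᵥ v) = -1 := by rw [toLinearMap₂'_swap J4_transpose, hv]
  set f₂ := w + ω v w • (A *ᵥ v)
  have hGram := transpose_mul_J4_mul_eq_J4_of_symplecticBasis (himage v w)
    (show ω v f₂ = 0 by simp [f₂, hvAv]) hv (show ω (A *ᵥ w) f₂ = 1 by simp [f₂, hw, himage])
    (show ω (A *ᵥ v) f₂ = 0 by simp [f₂, hvw, himage]) (by rw [hcomm, hvw])
  have hconj := mul_transpose_of_eq_transpose_of_mul_E13_add_E24 (hAA v) (hAA w) rfl
    (show A *ᵥ f₂ = A *ᵥ w by simp [f₂, mulVec_add, mulVec_smul, hAA])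
  refine ⟨_, hGram, ?_⟩
  rw [Matrix.mul_assoc, hconj, ← Matrix.mul_assoc,
    nonsing_inv_mul _ (isUnit_det_of_transpose_mul_J4_mul_eq_J4 hGram), Matrix.one_mul]

/-- If `A ∈ sp(4,ℂ)` satisfies `A² = 0` and `ker A` has dimension `2`, then `A` is
symplectically conjugated to `E₁₃ + E₂₄`. -/
theorem sp4_nilpotent_ker_dim_two_canonical_form
    (A : Matrix (Fin 4) (Fin 4) ℂ)
    (hsp : Aᵀ * J4 + J4 * A = 0)
    (hA2 : A ^ 2 = 0)
    (hker : Module.finrank ℂ (LinearMap.ker A.mulVecLin) = 2) :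
    ∃ B : Matrix (Fin 4) (Fin 4) ℂ,
      Bᵀ * J4 * B = J4 ∧
      B⁻¹ * A * B = !![0, 0, 1, 0;
                       0, 0, 0, 1;
                       0, 0, 0, 0;
                       0, 0, 0, 0] := by
  let β : LinearMap.BilinForm ℂ (Fin 4 → ℂ) := ω ∘ₗ A.mulVecLin
  have hβ : β.IsSymm := ⟨fun x y => toLinearMap₂'_mulVec_comm J4_transpose hsp x y⟩
  have hω : ker ω = ⊥ := separatingLeft_iff_ker_eq_bot.mp
    (separatingLeft_toLinearMap₂'_of_det_ne_zero' (by rw [det_J4]; exact one_ne_zero))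
  have hkerβ : finrank ℂ (ker β) + 1 < finrank ℂ (Fin 4 → ℂ) := by
    rw [ker_comp_of_ker_eq_bot _ hω, hker, finrank_fin_fun]
    norm_num
  obtain ⟨v, w, hv, hw, hvw⟩ := β.exists_orthonormal_pair hβ hkerβ
  exact exists_symplectic_conj_E13_add_E24 hsp hA2 hv hw hvw
end

section
/- Let A ∈ sp(4,ℂ) be nilpotent with A³ ≠ 0. Then the centralizer of A in sp(4,ℂ), namely {X ∈ sp(4,ℂ) : AX = XA}, equals the ℂ-linear span of A and A³. In particular this centralizer is a 2-dimensional abelian Lie subalgebra of sp(4,ℂ), all of whose elements are nilpotent. -/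
open Matrix

/-!
A nilpotent `A` with `A³ ≠ 0` on a 4-dimensional space has a cyclic vector `v` (any `v` with
`A³ v ≠ 0`), so every matrix commuting with `A` is a polynomial `c₀ + c₁ A + c₂ A² + c₃ A³` in `A`.
As `A` is skew-adjoint for `J`, the `J`-adjoint of `p(A)` is `p(-A)`, so `p(A)` is skew-adjoint
exactly when its even part `c₀ + c₂ A²` vanishes, i.e. when `c₀ = c₂ = 0`.
-/

section PowersInAlgebra

open Submodule

variable {K R : Type*} [Field K] [Ring R] [Algebra K R]

theorem linearIndependent_pair_of_mul_eq_zero_of_mul_ne_zero {x y z : R} (hxz : x * z ≠ 0)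
    (hyz : y * z = 0) (hy : y ≠ 0) : LinearIndependent K ![x, y] := by
  refine LinearIndependent.pair_iff.mpr fun s t hst ↦ ?_
  have hs : s = 0 := by
    have h := congrArg (· * z) hst
    simp only [add_mul, smul_mul_assoc, hyz, smul_zero, add_zero, zero_mul] at h
    exact (smul_eq_zero.mp h).resolve_right hxz
  subst hs
  rw [zero_smul, zero_add] at hst
  exact ⟨rfl, (smul_eq_zero.mp hst).resolve_right hy⟩

theorem linearIndependent_pair_self_pow_three {x : R} (hx4 : x ^ 4 = 0) (hx3 : x ^ 3 ≠ 0) :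
    LinearIndependent K ![x, x ^ 3] :=
  linearIndependent_pair_of_mul_eq_zero_of_mul_ne_zero (z := x ^ 2)
    (by rwa [← pow_succ']) (by rw [← pow_add]; exact pow_eq_zero_of_le (by norm_num) hx4) hx3

theorem finrank_span_pair_self_pow_three {x : R} (hx4 : x ^ 4 = 0) (hx3 : x ^ 3 ≠ 0) :
    Module.finrank K (span K {x, x ^ 3}) = 2 := by
  have hrange : Set.range ![x, x ^ 3] = {x, x ^ 3} := by simp [Set.pair_comm]
  rw [← hrange, finrank_span_eq_card (linearIndependent_pair_self_pow_three hx4 hx3),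
    Fintype.card_fin]

theorem span_pair_pow_le_adjoin (x : R) (n : ℕ) :
    span K {x, x ^ n} ≤ Subalgebra.toSubmodule (Algebra.adjoin K {x}) :=
  span_le.mpr (Set.pair_subset (Algebra.self_mem_adjoin_singleton K x)
    (pow_mem (Algebra.self_mem_adjoin_singleton K x) n))

theorem isNilpotent_of_mem_span_pair_pow {x y : R} {n : ℕ} (hx : IsNilpotent x) (hn : n ≠ 0)
    (hy : y ∈ span K {x, x ^ n}) : IsNilpotent y := by
  obtain ⟨a, b, rfl⟩ := mem_span_pair.mp hy
  exact (((Commute.self_pow x n).smul_left a).smul_right b).isNilpotent_add (hx.smul a)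
    ((hx.pow_of_pos hn).smul b)

end PowersInAlgebra

theorem Subalgebra.mem_centralizer_singleton_iff (R : Type*) {A : Type*} [CommSemiring R]
    [Semiring A] [Algebra R A] {a x : A} : x ∈ centralizer R {a} ↔ Commute a x := by
  simp [mem_centralizer_iff, commute_iff_eq]

namespace Module.End

open Submodule

variable {K V : Type*} [Field K] [AddCommGroup V] [Module K V]

theorem linearIndependent_pow_apply {f : End K V} {v : V} {m : ℕ}
    (hm : (f ^ m) v ≠ 0) (hm' : (f ^ (m + 1)) v = 0) :
    LinearIndependent K fun k : Fin (m + 1) ↦ (f ^ (k : ℕ)) v := by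
  induction m generalizing v with
  | zero => exact linearIndependent_unique_iff (ι := Fin 1) |>.mpr (by simpa using hm)
  | succ m ih =>
    have htail : Fin.tail (fun k : Fin (m + 2) ↦ (f ^ (k : ℕ)) v) =
        fun k : Fin (m + 1) ↦ (f ^ (k : ℕ)) (f v) := by
      ext k
      simp [Fin.tail, pow_succ, mul_apply]
    rw [linearIndependent_finSucc, htail]
    refine ⟨ih (by rwa [← mul_apply, ← pow_succ]) (by rwa [← mul_apply, ← pow_succ]), ?_⟩
    have hspan : span K (Set.range fun k : Fin (m + 1) ↦ (f ^ (k : ℕ)) (f v)) ≤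
        LinearMap.ker (f ^ (m + 1)) := by
      refine span_le.mpr (Set.range_subset_iff.mpr fun k ↦ ?_)
      rw [SetLike.mem_coe, LinearMap.mem_ker, ← mul_apply, ← mul_apply, mul_assoc, ← pow_succ,
        ← pow_add]
      exact pow_map_zero_of_le (by omega) hm'
    exact fun hv ↦ hm (hspan hv)

theorem exists_eq_sum_smul_pow_of_commute {R : Type*} [CommRing R] [Module R V]
    {f g : End R V} {v : V} {n : ℕ}
    (hv : span R (Set.range fun k : Fin n ↦ (f ^ (k : ℕ)) v) = ⊤) (hfg : Commute f g) :
    ∃ c : Fin n → R, g = ∑ k, c k • f ^ (k : ℕ) := by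
  obtain ⟨c, hc⟩ := (mem_span_range_iff_exists_fun R).mp (hv ▸ mem_top : g v ∈ _)
  refine ⟨c, LinearMap.ext_on_range hv fun k ↦ ?_⟩
  rw [← mul_apply, ← (hfg.pow_left k).eq, mul_apply, ← hc]
  simp only [map_sum, map_smul, LinearMap.sum_apply, LinearMap.smul_apply, ← mul_apply,
    ← pow_add, add_comm]

theorem exists_span_pow_apply_eq_top {f : End K V} {m : ℕ} (hm : f ^ m ≠ 0)
    (hm' : f ^ (m + 1) = 0) (hV : finrank K V = m + 1) :
    ∃ v : V, span K (Set.range fun k : Fin (m + 1) ↦ (f ^ (k : ℕ)) v) = ⊤ := by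
  obtain ⟨v, hv⟩ : ∃ v, (f ^ m) v ≠ 0 := by
    by_contra! h
    exact hm (LinearMap.ext h)
  refine ⟨v, (linearIndependent_pow_apply hv ?_).span_eq_top_of_card_eq_finrank ?_⟩
  · rw [hm', LinearMap.zero_apply]
  · rw [Fintype.card_fin, hV]

end Module.End

namespace Matrix

open Submodule

variable {K ι : Type*} [Field K] [Fintype ι]

theorem isSkewAdjoint_iff_transpose_mul_add_mul_eq_zero {J A : Matrix ι ι K} :
    J.IsSkewAdjoint A ↔ Aᵀ * J + J * A = 0 := by
  rw [Matrix.IsSkewAdjoint, Matrix.IsAdjointPair, mul_neg, add_eq_zero_iff_eq_neg]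

variable [DecidableEq ι]

theorem pow_card_eq_zero_of_isNilpotent {A : Matrix ι ι K} (hA : IsNilpotent A) :
    A ^ Fintype.card ι = 0 := by
  have hchar : A.charpoly = Polynomial.X ^ Fintype.card ι :=
    sub_eq_zero.mp (isNilpotent_charpoly_sub_pow_of_isNilpotent hA).eq_zero
  simpa [hchar] using A.aeval_self_charpoly

theorem exists_eq_sum_smul_pow_of_commute {A X : Matrix ι ι K} {m : ℕ} (hm : A ^ m ≠ 0)
    (hm' : A ^ (m + 1) = 0) (hι : Fintype.card ι = m + 1) (hAX : Commute A X) :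
    ∃ c : Fin (m + 1) → K, X = ∑ k, c k • A ^ (k : ℕ) := by
  let e := toLinAlgEquiv' (R := K) (n := ι)
  obtain ⟨v, hv⟩ := Module.End.exists_span_pow_apply_eq_top (f := e A)
    (by rwa [← map_pow, map_ne_zero_iff _ e.injective]) (by rw [← map_pow, hm', map_zero])
    (by rw [Module.finrank_fintype_fun_eq_card, hι])
  obtain ⟨c, hc⟩ := Module.End.exists_eq_sum_smul_pow_of_commute hv (hAX.map e)
  exact ⟨c, e.injective (by simpa [map_sum, map_pow] using hc)⟩

variable {J A : Matrix ι ι K}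

theorem transpose_pow_mul_of_isSkewAdjoint (hA : J.IsSkewAdjoint A) (k : ℕ) :
    (A ^ k)ᵀ * J = J * (-A) ^ k := by
  rw [transpose_pow]
  exact ((SemiconjBy.pow_right hA.symm k).eq).symm

theorem IsSkewAdjoint.pow_of_odd (hA : J.IsSkewAdjoint A) {k : ℕ} (hk : Odd k) :
    J.IsSkewAdjoint (A ^ k) := by
  rw [Matrix.IsSkewAdjoint, Matrix.IsAdjointPair, transpose_pow_mul_of_isSkewAdjoint hA,
    hk.neg_pow]

theorem isSkewAdjoint_sum_smul_pow_iff (hJ : IsUnit J) (hA : J.IsSkewAdjoint A) {n : ℕ}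
    (c : Fin n → K) :
    J.IsSkewAdjoint (∑ k, c k • A ^ (k : ℕ)) ↔ ∑ k, c k • ((-A) ^ (k : ℕ) + A ^ (k : ℕ)) = 0 := by
  have htr : (∑ k, c k • A ^ (k : ℕ))ᵀ * J = J * ∑ k, c k • (-A) ^ (k : ℕ) := by
    simp only [transpose_sum, transpose_smul, Finset.sum_mul, Finset.mul_sum, smul_mul_assoc,
      mul_smul_comm, transpose_pow_mul_of_isSkewAdjoint hA]
  rw [Matrix.IsSkewAdjoint, Matrix.IsAdjointPair, htr, hJ.mul_right_inj, eq_neg_iff_add_eq_zero,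
    ← Finset.sum_add_distrib]
  simp only [smul_add]

variable [NeZero (2 : K)]

theorem mem_span_pair_self_pow_three_of_isSkewAdjoint_of_commute (hι : Fintype.card ι = 4)
    (hJ : IsUnit J) (hA : J.IsSkewAdjoint A) (hA4 : A ^ 4 = 0) (hA3 : A ^ 3 ≠ 0)
    {X : Matrix ι ι K} (hX : J.IsSkewAdjoint X) (hAX : Commute A X) :
    X ∈ span K {A, A ^ 3} := by
  obtain ⟨c, rfl⟩ := exists_eq_sum_smul_pow_of_commute (m := 3) hA3 hA4 hι hAX
  have heven : (2 * c 0) • (1 : Matrix ι ι K) + (2 * c 2) • A ^ 2 = 0 := by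
    simpa [Fin.sum_univ_four, (by decide : Odd 3).neg_pow, two_mul, add_smul] using
      (isSkewAdjoint_sum_smul_pow_iff hJ hA c).mp hX
  have hA2 : A ^ 2 ≠ 0 := fun h ↦ hA3 (by rw [pow_succ, h, zero_mul])
  have hli : LinearIndependent K ![1, A ^ 2] :=
    linearIndependent_pair_of_mul_eq_zero_of_mul_ne_zero (by rwa [one_mul])
      (by rw [← pow_add]; exact hA4) hA2
  obtain ⟨h0, h2⟩ := LinearIndependent.pair_iff.mp hli _ _ heven
  refine mem_span_pair.mpr ⟨c 1, c 3, ?_⟩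
  simp [Fin.sum_univ_four, (mul_eq_zero.mp h0).resolve_left two_ne_zero,
    (mul_eq_zero.mp h2).resolve_left two_ne_zero]

theorem skewAdjointMatricesSubmodule_inf_centralizer_eq_span (hι : Fintype.card ι = 4)
    (hJ : IsUnit J) (hA : J.IsSkewAdjoint A) (hA4 : A ^ 4 = 0) (hA3 : A ^ 3 ≠ 0) :
    skewAdjointMatricesSubmodule J ⊓ Subalgebra.toSubmodule (Subalgebra.centralizer K {A}) =
      span K {A, A ^ 3} := by
  apply le_antisymm
  · rintro X ⟨hXJ, hXA⟩
    exact mem_span_pair_self_pow_three_of_isSkewAdjoint_of_commute hι hJ hA hA4 hA3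
      ((mem_skewAdjointMatricesSubmodule J X).mp hXJ)
      ((Subalgebra.mem_centralizer_singleton_iff K).mp hXA)
  · refine span_le.mpr (Set.pair_subset ⟨?_, ?_⟩ ⟨?_, ?_⟩)
    · exact (mem_skewAdjointMatricesSubmodule J A).mpr hA
    · exact (Subalgebra.mem_centralizer_singleton_iff K).mpr (Commute.refl A)
    · exact (mem_skewAdjointMatricesSubmodule J _).mpr (hA.pow_of_odd (by decide))
    · exact (Subalgebra.mem_centralizer_singleton_iff K).mpr (Commute.self_pow A 3)

end Matrix

theorem J4_mul_J4 : J4 * J4 = -1 := by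
  ext i j
  fin_cases i <;> fin_cases j <;>
    simp [J4, mul_apply, Fin.sum_univ_four, one_apply]

theorem isUnit_J4 : IsUnit J4 :=
  IsUnit.of_mul_eq_one (-J4) (by rw [mul_neg, J4_mul_J4, neg_neg])

/-- Let `A ∈ sp(4,ℂ)` be nilpotent with `A³ ≠ 0`.  Then the centralizer of `A` in
`sp(4,ℂ)` equals the `ℂ`-linear span of `A` and `A³`; in particular it is a
2-dimensional abelian Lie subalgebra of `sp(4,ℂ)` all of whose elements are
nilpotent. -/
theorem sp4_centralizer_of_regular_nilpotent
    (A : Matrix (Fin 4) (Fin 4) ℂ)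
    (hsp : Aᵀ * J4 + J4 * A = 0)
    (hnil : IsNilpotent A)
    (hA3 : A ^ 3 ≠ 0) :
    {X : Matrix (Fin 4) (Fin 4) ℂ | Xᵀ * J4 + J4 * X = 0 ∧ A * X = X * A}
        = (Submodule.span ℂ ({A, A ^ 3} : Set (Matrix (Fin 4) (Fin 4) ℂ)) : Set (Matrix (Fin 4) (Fin 4) ℂ)) ∧
    Module.finrank ℂ (Submodule.span ℂ ({A, A ^ 3} : Set (Matrix (Fin 4) (Fin 4) ℂ))) = 2 ∧
    (∀ X ∈ Submodule.span ℂ ({A, A ^ 3} : Set (Matrix (Fin 4) (Fin 4) ℂ)),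
      ∀ Y ∈ Submodule.span ℂ ({A, A ^ 3} : Set (Matrix (Fin 4) (Fin 4) ℂ)),
        X * Y = Y * X) ∧
    (∀ X ∈ Submodule.span ℂ ({A, A ^ 3} : Set (Matrix (Fin 4) (Fin 4) ℂ)),
      IsNilpotent X) := by
  have hA4 : A ^ 4 = 0 := by simpa using pow_card_eq_zero_of_isNilpotent hnil
  have hA : J4.IsSkewAdjoint A := isSkewAdjoint_iff_transpose_mul_add_mul_eq_zero.mpr hsp
  have hadj := span_pair_pow_le_adjoin (K := ℂ) A 3
  refine ⟨?_, finrank_span_pair_self_pow_three hA4 hA3, fun X hX Y hY ↦ ?_,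
    fun X hX ↦ isNilpotent_of_mem_span_pair_pow hnil three_ne_zero hX⟩
  · rw [← skewAdjointMatricesSubmodule_inf_centralizer_eq_span (Fintype.card_fin 4) isUnit_J4 hA
      hA4 hA3]
    ext X
    simp only [Set.mem_ofPred_eq, SetLike.mem_coe, Submodule.mem_inf,
      mem_skewAdjointMatricesSubmodule, isSkewAdjoint_iff_transpose_mul_add_mul_eq_zero,
      Subalgebra.mem_toSubmodule, Subalgebra.mem_centralizer_singleton_iff, commute_iff_eq]
  · exact (Algebra.commute_of_mem_adjoin_singleton_of_commute (hadj hY)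
      (Algebra.commute_of_mem_adjoin_self (hadj hX)).symm).eq
end
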